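/- For any linear algorithm Q_{d,n} using n function values, with d ≥ 1 and n > 2d, the worst-case error over the unit ball of F_d¹ satisfies e^{wor}(F_d¹, Q_{d,n}) ≥ d/(2n²). -/

import Mathlib

open Finset

noncomputable section

/-- The support of a frequency vector. -/
def supp {d : ℕ} (k : Fin d → ℤ) : Finset (Fin d) :=
  Finset.univ.filter (fun j => k j ≠ 0)

/-- `width(supp k) = max supp(k) - min supp(k) + 1`, with value 1 for empty support. -/
def width {d : ℕ} (k : Fin d → ℤ) : ℕ :=
  if h : (supp k).Nonempty then ((supp k).max' h).val - ((supp k).min' h).val + 1 else 1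

/-- `min_{j ∈ supp(k)} log |k_j|`, with value 0 for empty support. -/
noncomputable def logmin {d : ℕ} (k : Fin d → ℤ) : ℝ :=
  if h : (supp k).Nonempty then (supp k).inf' h (fun j => Real.log |(k j : ℝ)|) else 0

/-- `exp(2πiz)`. -/
noncomputable def e2pi (z : ℂ) : ℂ := Complex.exp (2 * Real.pi * Complex.I * z)

/-- The weight `max(1, min_{j ∈ supp k} log |k_j|)` defining the norm of `F_d¹`. -/
noncomputable def weight1 {d : ℕ} (k : Fin d → ℤ) : ℝ := max 1 (logmin k)

/-! If `n < |A|`, the `n` evaluations `P ↦ P(x_h)` on trigonometric polynomials with frequencies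
in `A` have a common nontrivial kernel element `∑_{k ∈ A} c_k e_k`; scale it so that
`max_k |c_k| = c_{k₀} = 1`. Multiplying by `e_{-k₀}` moves `k₀` to frequency `0`, so
`f = Re (s ∑_k c_k e_{k - k₀})` with `s = d / (2n²)` vanishes at every node while `∫ f = s`.
All frequencies `k - k₀` have entries of modulus at most `M ≈ n / d`, so the `F_d¹` norm of `f`
is at most `s |A| max(1, log M) ≤ s · 2n · n/d = 1`. -/

open MeasureTheory ComplexConjugate

section TorusChar

variable {d : ℕ}

lemma e2pi_sum {ι : Type*} (s : Finset ι) (a : ι → ℂ) :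
    e2pi (∑ j ∈ s, a j) = ∏ j ∈ s, e2pi (a j) := by
  simp only [e2pi, Finset.mul_sum, Complex.exp_sum]

def torusChar (k : Fin d → ℤ) (y : Fin d → ℝ) : ℂ := e2pi (∑ j, (k j : ℂ) * (y j : ℂ))

lemma torusChar_eq_exp (k : Fin d → ℤ) (y : Fin d → ℝ) :
    torusChar k y = Complex.exp (↑(2 * Real.pi * ∑ j, (k j : ℝ) * y j) * Complex.I) := by
  simp only [torusChar, e2pi]
  push_cast
  ring_nf

lemma torusChar_add (k l : Fin d → ℤ) (y : Fin d → ℝ) :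
    torusChar (k + l) y = torusChar k y * torusChar l y := by
  simp only [torusChar, e2pi, ← Complex.exp_add, Pi.add_apply, Int.cast_add, add_mul,
    Finset.sum_add_distrib, mul_add]

lemma torusChar_neg (k : Fin d → ℤ) (y : Fin d → ℝ) :
    torusChar (-k) y = conj (torusChar k y) := by
  rw [torusChar_eq_exp, torusChar_eq_exp, ← Complex.exp_conj, map_mul, Complex.conj_ofReal,
    Complex.conj_I]
  simp only [Pi.neg_apply, Int.cast_neg, neg_mul, Finset.sum_neg_distrib, mul_neg,
    Complex.ofReal_neg]

@[fun_prop]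
lemma continuous_torusChar (k : Fin d → ℤ) : Continuous (torusChar k) := by
  unfold torusChar e2pi
  fun_prop

lemma Continuous.integrableOn_unitBox {E : Type*} [NormedAddCommGroup E]
    {f : (Fin d → ℝ) → E} (hf : Continuous f) :
    IntegrableOn f (Set.univ.pi fun _ : Fin d => Set.Ico (0 : ℝ) 1) :=
  (hf.continuousOn.integrableOn_compact (isCompact_univ_pi fun _ => isCompact_Icc)).mono_set
    (Set.pi_mono fun _ _ => Set.Ico_subset_Icc_self)

lemma integral_Ico_e2pi_int_mul (m : ℤ) :
    ∫ t in Set.Ico (0 : ℝ) 1, e2pi (m * t) = if m = 0 then 1 else 0 := by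
  rw [integral_Ico_eq_integral_Ioo, ← integral_Ioc_eq_integral_Ioo,
    ← intervalIntegral.integral_of_le zero_le_one]
  split_ifs with hm
  · simp [hm, e2pi]
  · have hc : 2 * Real.pi * Complex.I * m ≠ 0 := by simp [Real.pi_ne_zero, hm]
    simp only [e2pi, ← mul_assoc]
    rw [integral_exp_mul_complex hc, Complex.ofReal_one, Complex.ofReal_zero, mul_one, mul_zero,
      show 2 * Real.pi * Complex.I * m = m * (2 * Real.pi * Complex.I) by ring,
      Complex.exp_int_mul_two_pi_mul_I, Complex.exp_zero, sub_self, zero_div]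

lemma integral_unitBox_torusChar (k : Fin d → ℤ) :
    ∫ y in Set.univ.pi fun _ : Fin d => Set.Ico (0 : ℝ) 1, torusChar k y =
      if k = 0 then 1 else 0 := by
  simp only [torusChar, e2pi_sum]
  rw [volume_pi, Measure.restrict_pi_pi,
    integral_fintype_prod_eq_prod (fun j (t : ℝ) => e2pi (k j * t))]
  simp only [integral_Ico_e2pi_int_mul, Finset.prod_ite_zero, Finset.prod_const_one,
    Finset.mem_univ, true_implies, funext_iff, Pi.zero_apply]

end TorusChar

lemma supp_neg {d : ℕ} (k : Fin d → ℤ) : supp (-k) = supp k := by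
  simp [supp]

lemma weight1_neg {d : ℕ} (k : Fin d → ℤ) : weight1 (-k) = weight1 k := by
  simp only [weight1, logmin, supp_neg, Pi.neg_apply, Int.cast_neg, abs_neg]

lemma weight1_nonneg {d : ℕ} (k : Fin d → ℤ) : 0 ≤ weight1 k :=
  zero_le_one.trans (le_max_left _ _)

lemma weight1_le_max_one_log {d : ℕ} {k : Fin d → ℤ} (M : ℕ) (hk : ∀ j, |k j| ≤ M) :
    weight1 k ≤ max 1 (Real.log M) := by
  refine max_le_max le_rfl ?_
  unfold logmin
  split_ifs with h
  · obtain ⟨j, hj⟩ := h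
    refine (Finset.inf'_le _ hj).trans (Real.log_le_log ?_ ?_)
    · simpa [supp] using hj
    · exact_mod_cast hk j
  · exact Real.log_natCast_nonneg M

section TrigPoly

variable {d : ℕ} {ι : Type*} [Fintype ι] (κ : ι → Fin d → ℤ) (c : ι → ℂ)

def trigPoly (y : Fin d → ℝ) : ℂ := ∑ i, c i * torusChar (κ i) y

/-- The Fourier coefficients of `fun y => (trigPoly κ c y).re`. -/
def rePartCoeff (k : Fin d → ℤ) : ℂ :=
  ∑ i, ((if k = κ i then c i else 0) + (if k = -κ i then conj (c i) else 0)) / 2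

lemma hasSum_rePartCoeff_mul_torusChar (y : Fin d → ℝ) :
    HasSum (fun k => rePartCoeff κ c k * torusChar k y) ((trigPoly κ c y).re : ℂ) := by
  have ite_mul (k a : Fin d → ℤ) (b : ℂ) :
      (if k = a then b else 0) * torusChar k y = if k = a then b * torusChar a y else 0 := by
    split_ifs with h <;> simp [h]
  have hterm (i : ι) : HasSum
      (fun k => ((if k = κ i then c i else 0) + (if k = -κ i then conj (c i) else 0)) / 2 *
        torusChar k y)
      ((c i * torusChar (κ i) y + conj (c i) * torusChar (-κ i) y) / 2) :=
    ((hasSum_ite_eq _ _).add (hasSum_ite_eq _ _)).div_const 2 |>.congr_fun fun k => by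
      rw [div_mul_eq_mul_div, add_mul, ite_mul, ite_mul]
  convert hasSum_sum fun i (_ : i ∈ Finset.univ) => hterm i using 1
  · simp only [rePartCoeff, Finset.sum_mul]
  · simp only [Complex.re_eq_add_conj, trigPoly, map_sum, map_mul, torusChar_neg,
      ← Finset.sum_add_distrib, Finset.sum_div]

lemma norm_rePartCoeff_mul_weight1_le (k : Fin d → ℤ) :
    ‖rePartCoeff κ c k‖ * weight1 k ≤
      ∑ i, ((if k = κ i then ‖c i‖ * weight1 (κ i) else 0) +
        (if k = -κ i then ‖c i‖ * weight1 (κ i) else 0)) / 2 := by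
  refine (mul_le_mul_of_nonneg_right (norm_sum_le _ _) (weight1_nonneg k)).trans ?_
  rw [Finset.sum_mul]
  gcongr with i
  calc _ ≤ (‖if k = κ i then c i else 0‖ + ‖if k = -κ i then conj (c i) else 0‖) / 2 *
        weight1 k := by
        rw [norm_div, Complex.norm_two]
        gcongr
        · exact weight1_nonneg k
        · exact norm_add_le _ _
    _ = _ := by split_ifs <;> subst_vars <;> simp [weight1_neg, add_div, div_mul_eq_mul_div]

lemma hasSum_norm_rePartCoeff_bound :
    HasSum (fun k => ∑ i, ((if k = κ i then ‖c i‖ * weight1 (κ i) else 0) +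
        (if k = -κ i then ‖c i‖ * weight1 (κ i) else 0)) / 2) (∑ i, ‖c i‖ * weight1 (κ i)) := by
  simpa only [add_self_div_two] using hasSum_sum fun i (_ : i ∈ Finset.univ) =>
    ((hasSum_ite_eq (κ i) (‖c i‖ * weight1 (κ i))).add
      (hasSum_ite_eq (-κ i) (‖c i‖ * weight1 (κ i)))).div_const 2

lemma summable_norm_rePartCoeff_mul_weight1 :
    Summable fun k => ‖rePartCoeff κ c k‖ * weight1 k :=
  (hasSum_norm_rePartCoeff_bound κ c).summable.of_nonneg_of_le
    (fun k => mul_nonneg (norm_nonneg _) (weight1_nonneg k)) (norm_rePartCoeff_mul_weight1_le κ c)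

lemma tsum_norm_rePartCoeff_mul_weight1_le :
    ∑' k, ‖rePartCoeff κ c k‖ * weight1 k ≤ ∑ i, ‖c i‖ * weight1 (κ i) :=
  hasSum_le (norm_rePartCoeff_mul_weight1_le κ c)
    (summable_norm_rePartCoeff_mul_weight1 κ c).hasSum (hasSum_norm_rePartCoeff_bound κ c)

@[fun_prop]
lemma continuous_trigPoly : Continuous (trigPoly κ c) := by
  unfold trigPoly
  fun_prop

lemma integral_unitBox_re_trigPoly :
    ∫ y in Set.univ.pi fun _ : Fin d => Set.Ico (0 : ℝ) 1, (trigPoly κ c y).re =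
      (∑ i, if κ i = 0 then c i else 0).re := by
  refine (integral_re (continuous_trigPoly κ c).integrableOn_unitBox).trans (congrArg Complex.re ?_)
  simp only [trigPoly]
  rw [integral_finsetSum _ fun i _ => ((continuous_torusChar _).integrableOn_unitBox).const_mul _]
  simp only [integral_const_mul, integral_unitBox_torusChar, mul_ite, mul_one, mul_zero]

lemma trigPoly_sub_const_mul (l : Fin d → ℤ) (a : ℂ) (y : Fin d → ℝ) :
    trigPoly (fun i => κ i - l) (fun i => a * c i) y =
      a * conj (torusChar l y) * trigPoly κ c y := by
  simp only [trigPoly, Finset.mul_sum, sub_eq_add_neg, torusChar_add, torusChar_neg]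
  exact Finset.sum_congr rfl fun i _ => by ring

end TrigPoly

lemma exists_normalized_relation {𝕜 M ι : Type*} [NormedField 𝕜] [AddCommGroup M] [Module 𝕜 M]
    [Module.Finite 𝕜 M] [Fintype ι] (v : ι → M) (h : Module.finrank 𝕜 M < Fintype.card ι) :
    ∃ (c : ι → 𝕜) (i₀ : ι), c i₀ = 1 ∧ (∀ i, ‖c i‖ ≤ 1) ∧ ∑ i, c i • v i = 0 := by
  obtain ⟨g, hg, i, hi⟩ := Fintype.not_linearIndependent_iff.mp
    (mt (LinearIndependent.fintype_card_le_finrank (b := v)) h.not_ge)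
  have : Nonempty ι := ⟨i⟩
  obtain ⟨i₀, hi₀⟩ := Finite.exists_max fun i => ‖g i‖
  have hg₀ : g i₀ ≠ 0 := norm_pos_iff.mp ((norm_pos_iff.mpr hi).trans_le (hi₀ i))
  refine ⟨fun i => g i / g i₀, i₀, div_self hg₀, fun i => ?_, ?_⟩
  · rw [norm_div]
    exact div_le_one_of_le₀ (hi₀ i) (norm_nonneg _)
  · simp only [div_eq_inv_mul, mul_smul, ← Finset.smul_sum, hg, smul_zero]

def foolingSet (d M : ℕ) : Finset (Fin d → ℤ) :=
  insert 0 ((Finset.univ ×ˢ Finset.Icc (1 : ℤ) M).image fun p => Pi.single p.1 p.2)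

lemma card_foolingSet (d M : ℕ) : (foolingSet d M).card = d * M + 1 := by
  have hinj : Set.InjOn (fun p : Fin d × ℤ => (Pi.single p.1 p.2 : Fin d → ℤ))
      (Finset.univ ×ˢ Finset.Icc (1 : ℤ) M : Finset (Fin d × ℤ)) := by
    rintro ⟨j, a⟩ ha ⟨j', a'⟩ - heq
    simp only [Finset.coe_product, Set.mem_prod, Finset.mem_coe, Finset.mem_Icc] at ha
    have hj : j = j' := by
      by_contra hj
      have := congrFun heq j
      simp [Pi.single_eq_of_ne hj] at this
      omega
    subst hj
    simpa using heq
  rw [foolingSet, Finset.card_insert_of_notMem, Finset.card_image_of_injOn hinj,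
    Finset.card_product, Finset.card_univ, Fintype.card_fin, Int.card_Icc]
  · simp
  · simp only [Finset.mem_image, Finset.mem_product, Finset.mem_Icc, Pi.single_eq_zero_iff]
    omega

lemma lt_card_foolingSet {d : ℕ} (n : ℕ) (hd : 1 ≤ d) : n < (foolingSet d (n / d + 1)).card := by
  rw [card_foolingSet]
  have := Nat.lt_mul_div_succ n hd
  omega

lemma foolingSet_bounds {d M : ℕ} {k : Fin d → ℤ} (hk : k ∈ foolingSet d M) (j : Fin d) :
    0 ≤ k j ∧ k j ≤ M := by
  simp only [foolingSet, Finset.mem_insert, Finset.mem_image, Finset.mem_product,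
    Finset.mem_Icc] at hk
  rcases hk with rfl | ⟨⟨j', a⟩, ⟨-, ha⟩, rfl⟩
  · simp
  · rcases eq_or_ne j j' with rfl | hj
    · simp only [Pi.single_eq_same]; omega
    · simp [Pi.single_eq_of_ne hj]

lemma card_mul_max_one_log_le {d n : ℕ} (hd : 1 ≤ d) (hn : d < n) :
    ((d * (n / d + 1) + 1 : ℕ) : ℝ) * max 1 (Real.log ((n / d + 1 : ℕ) : ℝ)) ≤ 2 * n ^ 2 / d := by
  have hcard : d * (n / d + 1) + 1 ≤ 2 * n := by
    have := Nat.mul_div_le n d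
    rw [mul_add]
    omega
  have hlog : max 1 (Real.log ((n / d + 1 : ℕ) : ℝ)) ≤ n / d := by
    have hd' : (0 : ℝ) < d := by exact_mod_cast hd
    refine max_le ?_ ?_
    · rw [le_div_iff₀ hd', one_mul]
      exact_mod_cast hn.le
    · calc Real.log ((n / d + 1 : ℕ) : ℝ) ≤ ((n / d + 1 : ℕ) : ℝ) - 1 :=
            Real.log_le_sub_one_of_pos (by positivity)
        _ = ((n / d : ℕ) : ℝ) := by push_cast; ring
        _ ≤ n / d := Nat.cast_div_le
  calc _ ≤ (2 * n : ℝ) * (n / d) :=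
        mul_le_mul (by exact_mod_cast hcard) hlog (zero_le_one.trans (le_max_left _ _))
          (by positivity)
    _ = 2 * n ^ 2 / d := by ring

lemma sum_norm_mul_weight1_sub_le {d M : ℕ} (k₀ : foolingSet d M) (c : foolingSet d M → ℂ)
    (hc : ∀ k, ‖c k‖ ≤ 1) :
    ∑ k, ‖c k‖ * weight1 ((k : Fin d → ℤ) - (k₀ : Fin d → ℤ)) ≤
      ((d * M + 1 : ℕ) : ℝ) * max 1 (Real.log M) := by
  calc ∑ k, ‖c k‖ * weight1 ((k : Fin d → ℤ) - (k₀ : Fin d → ℤ))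
      ≤ ∑ _k : foolingSet d M, 1 * max 1 (Real.log M) := by
        gcongr with k
        · exact weight1_nonneg _
        · exact hc k
        · refine weight1_le_max_one_log M fun j => abs_le.mpr ?_
          have := foolingSet_bounds k.2 j
          have := foolingSet_bounds k₀.2 j
          simp only [Pi.sub_apply]
          constructor <;> linarith
    _ = _ := by simp [card_foolingSet]

open MeasureTheory in
theorem lower_bound_Fd1 (d n : ℕ) (hd : 1 ≤ d) (hn : 2 * d < n)
    (x : Fin n → Fin d → ℝ) (w : Fin n → ℝ) :
    ∃ (f : (Fin d → ℝ) → ℝ) (fhat : (Fin d → ℤ) → ℂ),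
      Continuous f ∧
      Summable (fun k : Fin d → ℤ => ‖fhat k‖ * weight1 k) ∧
      (∀ y : Fin d → ℝ,
        (f y : ℂ) = ∑' k : Fin d → ℤ, fhat k * e2pi (∑ j, (k j : ℂ) * (y j : ℂ))) ∧
      (∑' k : Fin d → ℤ, ‖fhat k‖ * weight1 k) ≤ 1 ∧
      (d : ℝ) / (2 * n ^ 2) ≤
        |(∫ y in Set.univ.pi fun _ : Fin d => Set.Ico (0 : ℝ) 1, f y) -
          ∑ h : Fin n, w h * f (x h)| := by
  -- `n / d + 1` stands in for the paper's `⌈n/d⌉`.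
  set M := n / d + 1
  obtain ⟨c, k₀, hc₀, hc, hrel⟩ := exists_normalized_relation (𝕜 := ℂ)
    (fun (k : foolingSet d M) (h : Fin n) => torusChar k (x h))
    (by simpa using lt_card_foolingSet n hd)
  set s : ℝ := d / (2 * n ^ 2)
  set κ : foolingSet d M → Fin d → ℤ := fun k => k - k₀
  set c' : foolingSet d M → ℂ := fun k => s * c k
  have hnodes (h : Fin n) : trigPoly κ c' (x h) = 0 := by
    have := congrFun hrel h
    simp only [Finset.sum_apply, Pi.smul_apply, smul_eq_mul, Pi.zero_apply] at this
    rw [trigPoly_sub_const_mul (fun k : foolingSet d M => (k : Fin d → ℤ)) c, trigPoly, this,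
      mul_zero]
  have hnorm : ∑ k, ‖c' k‖ * weight1 (κ k) ≤ 1 := by
    have hd0 : (d : ℝ) ≠ 0 := Nat.cast_ne_zero.mpr (by omega)
    have hn0 : (n : ℝ) ≠ 0 := Nat.cast_ne_zero.mpr (by omega)
    calc ∑ k, ‖c' k‖ * weight1 (κ k) = s * ∑ k, ‖c k‖ * weight1 (κ k) := by
          simp [c', Finset.mul_sum, mul_assoc, abs_of_nonneg (show 0 ≤ s by positivity)]
      _ ≤ s * (2 * n ^ 2 / d) := by
          gcongr
          exact (sum_norm_mul_weight1_sub_le k₀ c hc).trans (card_mul_max_one_log_le hd (by omega))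
      _ = 1 := by
          simp only [s]
          field_simp
  have hint : ∫ y in Set.univ.pi fun _ : Fin d => Set.Ico (0 : ℝ) 1, (trigPoly κ c' y).re = s := by
    simp [integral_unitBox_re_trigPoly, κ, sub_eq_zero, c', hc₀]
  refine ⟨fun y => (trigPoly κ c' y).re, rePartCoeff κ c', by fun_prop,
    summable_norm_rePartCoeff_mul_weight1 κ c',
    fun y => (hasSum_rePartCoeff_mul_torusChar κ c' y).tsum_eq.symm,
    (tsum_norm_rePartCoeff_mul_weight1_le κ c').trans hnorm, ?_⟩
  simpa [hint, hnodes] using le_abs_self s
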